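/- arXiv:1501.05150 — 4 statements merged into one kernel-verified Lean document; each statement's English description precedes it below -/
import Mathlib

section
/- Let Q be a strictly positive m×m real matrix and A a non-negative m×n real matrix with no zero column. Then col(QA) ≤ col(Q), where for a strictly positive matrix B, col(B) = max over indices i,j,k of B_{ij}/B_{kj}. -/
open Matrix

/-- The maximal ratio of two entries in the same column of a matrix. -/
noncomputable def colRatio {m n : ℕ} (B : Matrix (Fin m) (Fin n) ℝ) : ℝ :=
  ⨆ i : Fin m, ⨆ j : Fin n, ⨆ k : Fin m, B i j / B k j

theorem colRatio_mul_le {m n : ℕ} (hm : 0 < m) (hn : 0 < n)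
    (Q : Matrix (Fin m) (Fin m) ℝ) (A : Matrix (Fin m) (Fin n) ℝ)
    (hQ : ∀ i j, 0 < Q i j) (hA : ∀ i j, 0 ≤ A i j)
    (hcol : ∀ j, ∃ i, 0 < A i j) :
    colRatio (Q * A) ≤ colRatio Q := by
  have hmne : Nonempty (Fin m) := ⟨⟨0, hm⟩⟩
  have hnne : Nonempty (Fin n) := ⟨⟨0, hn⟩⟩
  -- each ratio of Q is ≤ colRatio Q
  have hratio : ∀ i k l : Fin m, Q i l / Q k l ≤ colRatio Q := by
    intro i k l
    have h1 : Q i l / Q k l ≤ ⨆ k' : Fin m, Q i l / Q k' l :=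
      le_ciSup (f := fun k' : Fin m => Q i l / Q k' l) (Set.Finite.bddAbove (Set.finite_range _)) k
    have h2 : (⨆ k' : Fin m, Q i l / Q k' l) ≤ ⨆ j : Fin m, ⨆ k' : Fin m, Q i j / Q k' j :=
      le_ciSup (f := fun j : Fin m => ⨆ k' : Fin m, Q i j / Q k' j) (Set.Finite.bddAbove (Set.finite_range _)) l
    have h3 : (⨆ j : Fin m, ⨆ k' : Fin m, Q i j / Q k' j) ≤ colRatio Q :=
      le_ciSup (f := fun i : Fin m => ⨆ j : Fin m, ⨆ k' : Fin m, Q i j / Q k' j) (Set.Finite.bddAbove (Set.finite_range _)) i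
    linarith
  -- entrywise bound Q i l ≤ colRatio Q * Q k l
  have hent : ∀ i k l : Fin m, Q i l ≤ colRatio Q * Q k l := by
    intro i k l
    have := hratio i k l
    rwa [div_le_iff₀ (hQ k l)] at this
  -- positivity of (Q*A) k j
  have hpos : ∀ k j, 0 < (Q * A) k j := by
    intro k j
    obtain ⟨l, hl⟩ := hcol j
    rw [Matrix.mul_apply]
    apply Finset.sum_pos' (fun l' _ => mul_nonneg (hQ k l').le (hA l' j))
    exact ⟨l, Finset.mem_univ l, mul_pos (hQ k l) hl⟩
  -- key bound
  have hkey : ∀ i j k, (Q * A) i j ≤ colRatio Q * (Q * A) k j := by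
    intro i j k
    rw [Matrix.mul_apply, Matrix.mul_apply, Finset.mul_sum]
    refine Finset.sum_le_sum fun l _ => ?_
    rw [← mul_assoc]
    exact mul_le_mul_of_nonneg_right (hent i k l) (hA l j)
  refine ciSup_le fun i => ciSup_le fun j => ciSup_le fun k => ?_
  rw [div_le_iff₀ (hpos k j)]
  exact hkey i j k
end

section
/- Let B = {x_1, …, x_m} be a basis of ℝ^m and let ξ_1, …, ξ_r (r ≤ m) be linearly independent vectors in ℝ^m. Then there exists a subset I ⊆ {1,…,m} of cardinality r such that |det(⟨x_i, ξ_j⟩)_{i∈I, j≤r}| ≥ C_B · ‖ξ_1 ∧ ⋯ ∧ ξ_r‖, where C_B > 0 is a constant depending only on the basis B (and not on the ξ_j). -/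
/-!
Writing `ξ = η S` with `η` an orthonormal frame of `span ξ`, every minor factors as
`det ⟨b_I, ξ⟩ = det ⟨b_I, η⟩ · det S`, while `√(det Gram ξ) = |det S|`. So it suffices to bound
`max_I |det ⟨b_I, η⟩|` from below on the compact set of orthonormal `r`-frames. This maximum is
continuous, and positive because the columns of the `m × r` matrix `⟨b_i, η_j⟩` are independent,
so some `r` of its rows are independent.
-/

open Matrix Module Set
open scoped RealInnerProductSpace

theorem exists_strictMono_linearIndependent_comp {K M ι : Type*} [Field K] [AddCommGroup M]
    [Module K M] [LinearOrder ι] [Finite ι] {r : ℕ} (hr : finrank K M = r) {v : ι → M}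
    (hv : Submodule.span K (range v) = ⊤) :
    ∃ I : Fin r → ι, StrictMono I ∧ LinearIndependent K (v ∘ I) := by
  obtain ⟨s, -, -, hspan, hli⟩ :=
    exists_linearIndepOn_extension (linearIndepOn_empty K v) (empty_subset univ)
  have : Fintype s := Fintype.ofFinite s
  let basis : Basis s K M := .mk hli <| by
    rw [← image_eq_range, ← hv, ← image_univ]
    exact Submodule.span_le.2 hspan
  have hcard : s.toFinset.card = r := by
    rw [← hr, finrank_eq_card_basis basis, toFinset_card]
  let I := s.toFinset.orderEmbOfFin hcard
  refine ⟨I, I.strictMono, hli.comp (fun k ↦ ⟨I k, ?_⟩) fun k l h ↦ ?_⟩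
  · exact mem_toFinset.1 (s.toFinset.orderEmbOfFin_mem hcard k)
  · exact I.injective (congrArg Subtype.val h :)

theorem Matrix.exists_strictMono_det_submatrix_ne_zero {K ι : Type*} [Field K] [LinearOrder ι]
    [Fintype ι] {r : ℕ} (A : Matrix ι (Fin r) K) (hA : LinearIndependent K A.col) :
    ∃ I : Fin r → ι, StrictMono I ∧ (A.submatrix I id).det ≠ 0 := by
  have hrank : A.rank = r := by
    rw [← rank_transpose, hA.rank_matrix, Fintype.card_fin]
  have hrows : Submodule.span K (range A.row) = ⊤ :=
    Submodule.eq_top_of_finrank_eq <| by rw [← rank_eq_finrank_span_row, hrank, finrank_fin_fun]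
  obtain ⟨I, hI, hli⟩ := exists_strictMono_linearIndependent_comp (finrank_fin_fun K) hrows
  exact ⟨I, hI, (isUnit_iff_isUnit_det _).1 (linearIndependent_rows_iff_isUnit.1 hli) |>.ne_zero⟩

section InnerMatrix

variable {E ι κ μ : Type*} [NormedAddCommGroup E] [InnerProductSpace ℝ E]

def innerMatrix (v : ι → E) (w : κ → E) : Matrix ι κ ℝ := Matrix.of fun i j ↦ ⟪v i, w j⟫

theorem transpose_innerMatrix (v : ι → E) (w : κ → E) :
    (innerMatrix v w)ᵀ = innerMatrix w v := by
  ext i j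
  exact real_inner_comm _ _

theorem OrthonormalBasis.innerMatrix_eq_mul [Fintype κ] {V : Submodule ℝ E}
    (o : OrthonormalBasis κ ℝ V) (v : ι → E) {w : μ → E} (hw : ∀ j, w j ∈ V) :
    innerMatrix v w = innerMatrix v (fun k ↦ (o k : E)) * innerMatrix (fun k ↦ (o k : E)) w := by
  ext i j
  have hexp : w j = ∑ k, ⟪(o k : E), w j⟫ • (o k : E) := by
    simpa using congrArg Subtype.val (o.sum_repr' ⟨w j, hw j⟩).symm
  rw [mul_apply]
  conv_lhs => rw [innerMatrix, of_apply, hexp]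
  simp [innerMatrix, inner_sum, real_inner_smul_right, mul_comm]

theorem exists_orthonormal_abs_det_innerMatrix_eq [Fintype ι] [DecidableEq ι] {ξ : ι → E}
    (hξ : LinearIndependent ℝ ξ) :
    ∃ η : ι → E, Orthonormal ℝ η ∧ ∀ v : ι → E,
      |(innerMatrix v ξ).det| = |(innerMatrix v η).det| * √(gram ℝ ξ).det := by
  set V := Submodule.span ℝ (range ξ)
  have : FiniteDimensional ℝ V := .span_of_finite ℝ (finite_range ξ)
  have hdim : finrank ℝ V = Fintype.card ι := finrank_span_eq_card hξ
  let o := (stdOrthonormalBasis ℝ V).reindex (Fintype.equivFinOfCardEq hdim.symm).symm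
  have hξV : ∀ j, ξ j ∈ V := fun j ↦ Submodule.subset_span (mem_range_self j)
  set S := innerMatrix (fun k ↦ (o k : E)) ξ
  have hgram : gram ℝ ξ = Sᵀ * S := by
    rw [transpose_innerMatrix, ← o.innerMatrix_eq_mul ξ hξV]
    rfl
  refine ⟨fun k ↦ o k, o.orthonormal.comp_linearIsometry V.subtypeₗᵢ, fun v ↦ ?_⟩
  rw [hgram, det_mul, det_transpose, ← sq, Real.sqrt_sq_eq_abs, o.innerMatrix_eq_mul v hξV,
    det_mul, abs_mul]

theorem linearIndependent_col_innerMatrix [Fintype κ] (b : Basis ι ℝ E) {η : κ → E}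
    (hη : LinearIndependent ℝ η) : LinearIndependent ℝ (innerMatrix b η).col := by
  rw [Fintype.linearIndependent_iff] at hη ⊢
  refine fun c hc ↦ hη c (InnerProductSpace.ext_inner_left_basis b fun i ↦ ?_)
  simpa [innerMatrix, inner_sum, real_inner_smul_right] using congrFun hc i

theorem continuous_det_innerMatrix [Fintype ι] [DecidableEq ι] (v : ι → E) :
    Continuous fun w : ι → E ↦ (innerMatrix v w).det :=
  .matrix_det <| continuous_matrix fun _ j ↦ continuous_const.inner (continuous_apply j)

theorem isCompact_setOf_orthonormal [FiniteDimensional ℝ E] :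
    IsCompact {η : ι → E | Orthonormal ℝ η} := by
  classical
  have hclosed : IsClosed {η : ι → E | Orthonormal ℝ η} := by
    have : {η : ι → E | Orthonormal ℝ η} =
        ⋂ i, ⋂ j, {η | ⟪η i, η j⟫ = if i = j then 1 else 0} := by
      ext
      simp [orthonormal_iff_ite]
    rw [this]
    exact isClosed_iInter fun i ↦ isClosed_iInter fun j ↦
      isClosed_eq ((continuous_apply i).inner (continuous_apply j)) continuous_const
  refine (isCompact_univ_pi fun _ ↦ isCompact_sphere (0 : E) 1).of_isClosed_subset hclosed ?_
  intro η hη i _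
  simpa using hη.1 i

end InnerMatrix

section MaxMinor

open NNReal Finset

variable {E ι : Type*} [NormedAddCommGroup E] [InnerProductSpace ℝ E] [LinearOrder ι] [Fintype ι]
  {r : ℕ}

noncomputable def maxMinor (b : ι → E) (η : Fin r → E) : ℝ≥0 :=
  (univ.filter fun I : Fin r → ι ↦ StrictMono I).sup fun I ↦ ‖(innerMatrix (b ∘ I) η).det‖₊

theorem continuous_maxMinor (b : ι → E) : Continuous (maxMinor (r := r) b) :=
  Continuous.finset_sup_apply fun I _ ↦ (continuous_det_innerMatrix (b ∘ I)).nnnorm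

theorem maxMinor_pos (b : Basis ι ℝ E) {η : Fin r → E} (hη : LinearIndependent ℝ η) :
    0 < maxMinor b η := by
  obtain ⟨I, hI, hdet⟩ := (innerMatrix b η).exists_strictMono_det_submatrix_ne_zero
    (linearIndependent_col_innerMatrix b hη)
  exact (nnnorm_pos.2 hdet).trans_le (le_sup (f := fun I ↦ ‖(innerMatrix (b ∘ I) η).det‖₊)
    (mem_filter.2 ⟨mem_univ I, hI⟩))

end MaxMinor

theorem exists_subset_det_ge_general {m r : ℕ}
    (b : Module.Basis (Fin m) ℝ (EuclideanSpace ℝ (Fin m))) :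
    ∃ C > 0, ∀ ξ : Fin r → EuclideanSpace ℝ (Fin m), LinearIndependent ℝ ξ →
      ∃ I : Fin r → Fin m, StrictMono I ∧
        C * Real.sqrt (Matrix.det (Matrix.of fun i j => (inner ℝ (ξ i) (ξ j) : ℝ))) ≤
          |Matrix.det (Matrix.of fun i j => (inner ℝ (b (I i)) (ξ j) : ℝ))| := by
  obtain ⟨c, hc, hcle⟩ := isCompact_setOf_orthonormal.exists_forall_le'
    (continuous_maxMinor b).continuousOn fun η hη ↦ maxMinor_pos b hη.linearIndependent
  refine ⟨c, hc, fun ξ hξ ↦ ?_⟩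
  obtain ⟨η, hη, hdet⟩ := exists_orthonormal_abs_det_innerMatrix_eq hξ
  obtain ⟨I, hI, hcI⟩ := (Finset.le_sup_iff hc).1 (hcle η hη)
  refine ⟨I, (Finset.mem_filter.1 hI).2, ?_⟩
  change (c : ℝ) * √(gram ℝ ξ).det ≤ |(innerMatrix (b ∘ I) ξ).det|
  rw [hdet]
  gcongr
  simpa using NNReal.coe_le_coe.2 hcI

theorem exists_subset_det_ge {m r : ℕ} (hr : r ≤ m)
    (b : Module.Basis (Fin m) ℝ (EuclideanSpace ℝ (Fin m))) :
    ∃ C > 0, ∀ ξ : Fin r → EuclideanSpace ℝ (Fin m), LinearIndependent ℝ ξ →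
      ∃ I : Fin r → Fin m, StrictMono I ∧
        C * Real.sqrt (Matrix.det (Matrix.of fun i j => (inner ℝ (ξ i) (ξ j) : ℝ))) ≤
          |Matrix.det (Matrix.of fun i j => (inner ℝ (b (I i)) (ξ j) : ℝ))| :=
  exists_subset_det_ge_general b
end

section
/- Let W_1, W_2, … be non-negative random variables such that for every n and every deterministic increasing sequence j_1 < … < j_n, P[∑_{i=1}^n W_{j_i} ≥ Kn] ≤ exp(-εKn/2) whenever K ≥ 2(log C)/ε, where ε > 0 and C > 1 are fixed constants. Then there exists L_1 > 0 such that almost surely, for every δ ∈ (0, e^{-1}), for all sufficiently large N: max{∑_{n∈Ψ} W_n : Ψ ⊆ {1,…,N}, |Ψ| ≤ δN} ≤ L_1 · log(1/δ) · δN. -/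
/-!
Union bound plus Borel–Cantelli. Weighing a subset `t ⊆ {1,…,N}` by `δ^|t| (1-δ)^(N-|t|)`, the
weights sum to `1`, so there are at most `exp (4 log(1/δ) δN)` subsets of size at most `δN`. By the
hypothesis, each of them has sum above `L₁ log(1/δ) δN` with probability at most
`exp (-ε L₁ log(1/δ) δN / 2)`; once `ε L₁ ≥ 10` the union of these events has probability
`≤ exp (-log(1/δ) δN)`, which is summable in `N`. This gives the bound almost surely for each of the
countably many `δ = 1/k`, and any `δ < e⁻¹` is within a factor `2` of some `1/k`, at the cost of
doubling `L₁`.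
-/

open MeasureTheory Finset
open Real Filter

theorem Finset.sum_orderEmbOfFin {M : Type*} [AddCommMonoid M] (s : Finset ℕ) (f : ℕ → M) :
    ∑ i : Fin #s, f (s.orderEmbOfFin rfl i) = ∑ n ∈ s, f n := by
  rw [← s.sum_coe_sort f, ← (s.orderIsoOfFin rfl).toEquiv.sum_comp]
  rfl

theorem Finset.card_powerset_filter_card_le_le_one_div {α : Type*} (s : Finset α) {δ : ℝ}
    (hδ0 : 0 < δ) (hδ1 : δ < 1) (x : ℝ) :
    (#{t ∈ s.powerset | (#t : ℝ) ≤ x} : ℝ) ≤ 1 / (δ ^ x * (1 - δ) ^ #s) := by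
  have hδ1' : 0 < 1 - δ := by linarith
  have hweight (t : Finset α) (ht : (#t : ℝ) ≤ x) :
      δ ^ x * (1 - δ) ^ #s ≤ δ ^ #t * (1 - δ) ^ (#s - #t) := by
    rw [← rpow_natCast δ]
    exact mul_le_mul (rpow_le_rpow_of_exponent_ge hδ0 hδ1.le ht)
      (pow_le_pow_of_le_one hδ1'.le (by linarith) (Nat.sub_le _ _)) (by positivity)
      (by positivity)
  rw [le_div_iff₀ (by positivity)]
  calc _ = ∑ t ∈ s.powerset with (#t : ℝ) ≤ x, δ ^ x * (1 - δ) ^ #s := by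
        rw [sum_const, nsmul_eq_mul]
    _ ≤ ∑ t ∈ s.powerset with (#t : ℝ) ≤ x, δ ^ #t * (1 - δ) ^ (#s - #t) :=
        sum_le_sum fun t ht => hweight t (mem_filter.1 ht).2
    _ ≤ ∑ t ∈ s.powerset, δ ^ #t * (1 - δ) ^ (#s - #t) :=
        sum_le_sum_of_subset_of_nonneg (filter_subset _ _) fun _ _ _ => by positivity
    _ = 1 := by rw [sum_pow_mul_eq_add_pow, add_sub_cancel, one_pow]

theorem Real.log_one_div_one_sub_le {δ : ℝ} (hδ0 : 0 ≤ δ) (hδ : δ ≤ 1 / 2) :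
    log (1 / (1 - δ)) ≤ 2 * δ := by
  have hδ1 : 0 < 1 - δ := by linarith
  calc log (1 / (1 - δ)) ≤ 1 / (1 - δ) - 1 := log_le_sub_one_of_pos (by positivity)
    _ = δ / (1 - δ) := by field_simp; ring
    _ ≤ 2 * δ := by rw [div_le_iff₀ hδ1]; nlinarith

theorem Real.two_div_three_le_log_one_div {δ : ℝ} (hδ0 : 0 < δ) (hδ : δ ≤ 1 / 2) :
    2 / 3 ≤ log (1 / δ) :=
  calc 2 / 3 ≤ log 2 := by linarith [log_two_gt_d9]
    _ ≤ log (1 / δ) := log_le_log two_pos (by rw [le_div_iff₀ hδ0]; linarith)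

theorem Finset.card_powerset_filter_card_le_mul_le_exp {α : Type*} (s : Finset α) {δ : ℝ}
    (hδ0 : 0 < δ) (hδ : δ ≤ 1 / 2) :
    (#{t ∈ s.powerset | (#t : ℝ) ≤ δ * #s} : ℝ) ≤ exp (4 * log (1 / δ) * (δ * #s)) := by
  have hlog := two_div_three_le_log_one_div hδ0 hδ
  have hδN : 0 ≤ δ * #s := by positivity
  have hδ1 : 0 < 1 - δ := by linarith
  calc _ ≤ 1 / (δ ^ (δ * #s) * (1 - δ) ^ #s) :=
        s.card_powerset_filter_card_le_le_one_div hδ0 (by linarith) _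
    _ = exp (log (1 / δ) * (δ * #s) + #s * log (1 / (1 - δ))) := by
        rw [exp_add, ← rpow_def_of_pos (by positivity), ← log_pow, exp_log (by positivity),
          div_rpow zero_le_one hδ0.le, one_rpow, div_pow, one_pow, one_div_mul_one_div]
    _ ≤ exp (4 * log (1 / δ) * (δ * #s)) := by
        gcongr
        have := mul_le_mul_of_nonneg_left (log_one_div_one_sub_le hδ0.le hδ) (#s).cast_nonneg
        nlinarith [mul_le_mul_of_nonneg_right hlog hδN]

def LargeDeviationBound {Ω : Type*} [MeasurableSpace Ω] (μ : Measure Ω) (W : ℕ → Ω → ℝ)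
    (ε C : ℝ) : Prop :=
  ∀ (n : ℕ) (j : Fin n → ℕ), StrictMono j → ∀ K : ℝ, 2 * log C / ε ≤ K →
    (μ {ω | K * n ≤ ∑ i : Fin n, W (j i) ω}).toReal ≤ exp (-(ε * K * n) / 2)

namespace LargeDeviationBound

variable {Ω : Type*} [MeasurableSpace Ω] {μ : Measure Ω} [IsFiniteMeasure μ]
  {W : ℕ → Ω → ℝ} {ε C : ℝ}

theorem measure_lt_sum_le (hLD : LargeDeviationBound μ W ε C) (Ψ : Finset ℕ) {T : ℝ}
    (hT0 : 0 ≤ T) (hT : 2 * log C / ε * #Ψ ≤ T) :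
    μ {ω | T < ∑ n ∈ Ψ, W n ω} ≤ ENNReal.ofReal (exp (-(ε * T) / 2)) := by
  rcases Ψ.eq_empty_or_nonempty with rfl | hΨ
  · simp [hT0.not_gt]
  have hcard : (0 : ℝ) < #Ψ := by exact_mod_cast hΨ.card_pos
  have hld := hLD #Ψ (Ψ.orderEmbOfFin rfl) (Ψ.orderEmbOfFin rfl).strictMono (T / #Ψ)
    (by rwa [le_div_iff₀ hcard])
  rw [div_mul_cancel₀ _ hcard.ne', mul_assoc, div_mul_cancel₀ _ hcard.ne'] at hld
  rw [ENNReal.le_ofReal_iff_toReal_le (measure_ne_top μ _) (exp_nonneg _)]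
  refine le_trans (measureReal_mono fun ω hω => ?_) hld
  exact hω.le.trans (sum_orderEmbOfFin Ψ (W · ω)).ge

variable {L₁ δ : ℝ}

theorem measure_exists_subset_lt_sum_le (hLD : LargeDeviationBound μ W ε C) (hε : 0 < ε)
    (hL₁C : 3 * log C ≤ ε * L₁) (hL₁ : 10 ≤ ε * L₁) (hδ0 : 0 < δ) (hδ : δ ≤ 1 / 2) (N : ℕ) :
    μ (⋃ Ψ ∈ {Ψ ∈ (Icc 1 N).powerset | (#Ψ : ℝ) ≤ δ * N},
        {ω | L₁ * log (1 / δ) * (δ * N) < ∑ n ∈ Ψ, W n ω})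
      ≤ ENNReal.ofReal (exp (N * -(log (1 / δ) * δ))) := by
  set L := log (1 / δ)
  have hL : 2 / 3 ≤ L := two_div_three_le_log_one_div hδ0 hδ
  have hδN : 0 ≤ δ * N := by positivity
  have hL₁0 : 0 ≤ L₁ := nonneg_of_mul_nonneg_right (by linarith) hε
  have hKL : 2 * log C / ε ≤ L₁ * L := by
    rw [div_le_iff₀ hε]
    nlinarith [mul_le_mul_of_nonneg_left hL (by linarith : 0 ≤ ε * L₁)]
  have hcount := (Icc 1 N).card_powerset_filter_card_le_mul_le_exp hδ0 hδ
  simp only [Nat.card_Icc, Nat.add_sub_cancel] at hcount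
  calc _ ≤ ∑ Ψ ∈ (Icc 1 N).powerset with (#Ψ : ℝ) ≤ δ * N,
          μ {ω | L₁ * L * (δ * N) < ∑ n ∈ Ψ, W n ω} := measure_biUnion_finset_le _ _
    _ ≤ ∑ Ψ ∈ (Icc 1 N).powerset with (#Ψ : ℝ) ≤ δ * N,
          ENNReal.ofReal (exp (-(ε * (L₁ * L * (δ * N))) / 2)) := by
        refine sum_le_sum fun Ψ hΨ => hLD.measure_lt_sum_le Ψ (by positivity) ?_
        calc 2 * log C / ε * #Ψ ≤ L₁ * L * #Ψ := by gcongr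
          _ ≤ L₁ * L * (δ * N) := by gcongr; exact (mem_filter.1 hΨ).2
    _ = ENNReal.ofReal (#{Ψ ∈ (Icc 1 N).powerset | (#Ψ : ℝ) ≤ δ * N}
          * exp (-(ε * (L₁ * L * (δ * N))) / 2)) := by
        rw [sum_const, nsmul_eq_mul, ENNReal.ofReal_mul (by positivity), ENNReal.ofReal_natCast]
    _ ≤ ENNReal.ofReal (exp (N * -(L * δ))) := by
        refine ENNReal.ofReal_le_ofReal
          ((mul_le_mul_of_nonneg_right hcount (exp_nonneg _)).trans ?_)
        rw [← exp_add, exp_le_exp]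
        nlinarith [mul_nonneg (sub_nonneg.2 hL₁) (mul_nonneg (by linarith : (0:ℝ) ≤ L) hδN)]

theorem ae_eventually_forall_subset_sum_le (hLD : LargeDeviationBound μ W ε C) (hε : 0 < ε)
    (hL₁C : 3 * log C ≤ ε * L₁) (hL₁ : 10 ≤ ε * L₁) (hδ0 : 0 < δ) (hδ : δ ≤ 1 / 2) :
    ∀ᵐ ω ∂μ, ∀ᶠ N : ℕ in atTop, ∀ Ψ ⊆ Icc 1 N, (#Ψ : ℝ) ≤ δ * N →
      ∑ n ∈ Ψ, W n ω ≤ L₁ * log (1 / δ) * (δ * N) := by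
  have hrate : -(log (1 / δ) * δ) < 0 := by
    have := two_div_three_le_log_one_div hδ0 hδ
    nlinarith
  have hsum : ∑' N : ℕ, μ (⋃ Ψ ∈ {Ψ ∈ (Icc 1 N).powerset | (#Ψ : ℝ) ≤ δ * N},
      {ω | L₁ * log (1 / δ) * (δ * N) < ∑ n ∈ Ψ, W n ω}) ≠ ⊤ := by
    refine ne_top_of_le_ne_top ?_
      (ENNReal.tsum_le_tsum (hLD.measure_exists_subset_lt_sum_le hε hL₁C hL₁ hδ0 hδ))
    rw [← ENNReal.ofReal_tsum_of_nonneg (fun _ => exp_nonneg _)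
      (summable_exp_nat_mul_iff.2 hrate)]
    exact ENNReal.ofReal_ne_top
  filter_upwards [ae_eventually_notMem hsum] with ω hω
  filter_upwards [hω] with N hN Ψ hΨ hcard
  exact not_lt.1 fun h => hN <| Set.mem_biUnion (mem_filter.2 ⟨mem_powerset.2 hΨ, hcard⟩) h

end LargeDeviationBound

theorem exists_inv_natCast_add_two_mem_Icc {δ : ℝ} (hδ0 : 0 < δ) (hδ : δ ≤ 1 / 2) :
    ∃ k : ℕ, ((k : ℝ) + 2)⁻¹ ∈ Set.Icc δ (2 * δ) := by
  have h2 : 2 ≤ δ⁻¹ := by rw [le_inv_comm₀ two_pos hδ0]; linarith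
  have hm : 2 ≤ ⌊δ⁻¹⌋₊ := Nat.le_floor (by exact_mod_cast h2)
  refine ⟨⌊δ⁻¹⌋₊ - 2, ?_⟩
  rw [Nat.cast_sub hm, Nat.cast_two, sub_add_cancel]
  have hpos : (0 : ℝ) < ⌊δ⁻¹⌋₊ := by positivity
  constructor
  · exact le_inv_of_le_inv₀ hpos (Nat.floor_le (by positivity))
  · rw [inv_le_iff_one_le_mul₀ hpos]
    have hm' : (2 : ℝ) ≤ ⌊δ⁻¹⌋₊ := by exact_mod_cast hm
    nlinarith [Nat.lt_floor_add_one δ⁻¹, mul_inv_cancel₀ hδ0.ne']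

theorem subset_sums_bound_general {Ω : Type*} [MeasurableSpace Ω] (μ : Measure Ω)
    [IsProbabilityMeasure μ] (W : ℕ → Ω → ℝ)
    (ε C : ℝ) (hε : 0 < ε)
    (hLD : ∀ (n : ℕ) (j : Fin n → ℕ), StrictMono j → ∀ K : ℝ, 2 * Real.log C / ε ≤ K →
      (μ {ω | K * n ≤ ∑ i : Fin n, W (j i) ω}).toReal ≤ Real.exp (-(ε * K * n) / 2)) :
    ∃ L₁ > (0 : ℝ), ∀ᵐ ω ∂μ, ∀ δ : ℝ, 0 < δ → δ < Real.exp (-1) →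
      ∃ N₀ : ℕ, ∀ N ≥ N₀, ∀ Ψ ⊆ Finset.Icc 1 N, (Ψ.card : ℝ) ≤ δ * N →
        (∑ n ∈ Ψ, W n ω) ≤ L₁ * Real.log (1 / δ) * (δ * N) := by
  set L₁ := max (3 * log C) 10 / ε
  have hL₁C : 3 * log C ≤ ε * L₁ := by rw [mul_div_cancel₀ _ hε.ne']; exact le_max_left _ _
  have hL₁ : 10 ≤ ε * L₁ := by rw [mul_div_cancel₀ _ hε.ne']; exact le_max_right _ _
  have hae : ∀ᵐ ω ∂μ, ∀ k : ℕ, ∀ᶠ N : ℕ in atTop, ∀ Ψ ⊆ Icc 1 N,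
      (#Ψ : ℝ) ≤ ((k : ℝ) + 2)⁻¹ * N →
      ∑ n ∈ Ψ, W n ω ≤ L₁ * log (1 / ((k : ℝ) + 2)⁻¹) * (((k : ℝ) + 2)⁻¹ * N) :=
    ae_all_iff.2 fun k => LargeDeviationBound.ae_eventually_forall_subset_sum_le hLD hε hL₁C hL₁
      (by positivity) (by rw [one_div]; gcongr; linarith [k.cast_nonneg (α := ℝ)])
  refine ⟨2 * L₁, by positivity, ?_⟩
  filter_upwards [hae] with ω hω δ hδ0 hδe
  have hδ : δ ≤ 1 / 2 := by
    refine hδe.le.trans ?_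
    rw [exp_neg, inv_le_comm₀ (exp_pos 1) one_half_pos, one_div, inv_inv]
    linarith [exp_one_gt_d9]
  obtain ⟨k, hδk, hkδ⟩ := exists_inv_natCast_add_two_mem_Icc hδ0 hδ
  obtain ⟨N₀, hN₀⟩ := (hω k).exists_forall_of_atTop
  refine ⟨N₀, fun N hN Ψ hΨ hcard => ?_⟩
  have hlog : 0 ≤ log (1 / δ) := log_nonneg (by rw [le_div_iff₀ hδ0]; linarith)
  calc ∑ n ∈ Ψ, W n ω ≤ L₁ * log (1 / ((k : ℝ) + 2)⁻¹) * (((k : ℝ) + 2)⁻¹ * N) :=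
        hN₀ N hN Ψ hΨ (hcard.trans (by gcongr))
    _ ≤ L₁ * log (1 / δ) * (2 * δ * N) := by gcongr
    _ = 2 * L₁ * log (1 / δ) * (δ * N) := by ring

theorem subset_sums_bound {Ω : Type*} [MeasurableSpace Ω] (μ : Measure Ω)
    [IsProbabilityMeasure μ] (W : ℕ → Ω → ℝ)
    (hWmeas : ∀ n, Measurable (W n)) (hWpos : ∀ n ω, 0 ≤ W n ω)
    (ε C : ℝ) (hε : 0 < ε) (hC : 1 < C)
    (hLD : ∀ (n : ℕ) (j : Fin n → ℕ), StrictMono j → ∀ K : ℝ, 2 * Real.log C / ε ≤ K →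
      (μ {ω | K * n ≤ ∑ i : Fin n, W (j i) ω}).toReal ≤ Real.exp (-(ε * K * n) / 2)) :
    ∃ L₁ > (0 : ℝ), ∀ᵐ ω ∂μ, ∀ δ : ℝ, 0 < δ → δ < Real.exp (-1) →
      ∃ N₀ : ℕ, ∀ N ≥ N₀, ∀ Ψ ⊆ Finset.Icc 1 N, (Ψ.card : ℝ) ≤ δ * N →
        (∑ n ∈ Ψ, W n ω) ≤ L₁ * Real.log (1 / δ) * (δ * N) :=
  subset_sums_bound_general μ W ε C hε hLD
end

section
/- Let M be an m×m complex matrix, S an m×m non-negative real matrix with |M(b,c)| ≤ S(b,c) - (1/2)ρ·1_{c=c_0} for all b,c (for a fixed column c_0 and some ρ ∈ [0,1]), and let x ∈ ℝ^m be a strictly positive vector. Then for every b, ∑_c |M(b,c)| x_c ≤ (1 - c₂·ψ(x)·ρ) · (S x)_b, where ψ(x) = (min_j x_j)/(max_j x_j) and c₂ = 1/(2m·max_{i,j} S(i,j)). -/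
/-!
Bounding `‖M b c‖` by `S b c` everywhere except in column `c₀`, where half of `ρ` is
saved, gives `∑ c, ‖M b c‖ * x c ≤ (S x)_b - ρ x_{c₀} / 2`. The saving is comparable to
`(S x)_b` itself, because `(S x)_b ≤ m (max S) (max x)` while `x_{c₀} ≥ min x`.
-/

open Matrix

theorem sum_norm_mul_le_dotProduct_sub {κ E : Type*} [Fintype κ] [DecidableEq κ] [Norm E]
    (v : κ → E) (s x : κ → ℝ) (c₀ : κ) (δ : ℝ)
    (hv : ∀ c, ‖v c‖ ≤ s c - δ * (if c = c₀ then 1 else 0)) (hx : ∀ c, 0 ≤ x c) :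
    ∑ c, ‖v c‖ * x c ≤ s ⬝ᵥ x - δ * x c₀ :=
  calc ∑ c, ‖v c‖ * x c
      ≤ ∑ c, (s c - δ * (if c = c₀ then 1 else 0)) * x c :=
        Finset.sum_le_sum fun c _ => mul_le_mul_of_nonneg_right (hv c) (hx c)
    _ = s ⬝ᵥ x - δ * x c₀ := by
        simp [dotProduct, sub_mul, Finset.sum_sub_distrib]

namespace Matrix

variable {ι κ : Type*}

theorem apply_le_iSup_iSup [Finite ι] [Finite κ] (S : Matrix ι κ ℝ) (i : ι) (j : κ) :
    S i j ≤ ⨆ i, ⨆ j, S i j :=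
  le_ciSup₂ (Set.finite_iUnion fun _ => Set.finite_range _).bddAbove i j

theorem mulVec_apply_le_card_mul_iSup_mul_iSup [Finite ι] [Fintype κ] (S : Matrix ι κ ℝ)
    (hS : ∀ i j, 0 ≤ S i j) (x : κ → ℝ) (hx : ∀ j, 0 ≤ x j) (b : ι) :
    (S *ᵥ x) b ≤ Fintype.card κ * (⨆ i, ⨆ j, S i j) * ⨆ j, x j :=
  calc (S *ᵥ x) b = ∑ c, S b c * x c := rfl
    _ ≤ ∑ _c : κ, (⨆ i, ⨆ j, S i j) * ⨆ j, x j :=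
        Finset.sum_le_sum fun c _ =>
          mul_le_mul (S.apply_le_iSup_iSup b c) (le_ciSup (Finite.bddAbove_range x) c) (hx c)
            ((hS b c).trans (S.apply_le_iSup_iSup b c))
    _ = Fintype.card κ * (⨆ i, ⨆ j, S i j) * ⨆ j, x j := by
        rw [Finset.sum_const, Finset.card_univ, nsmul_eq_mul, mul_assoc]

end Matrix

theorem contraction_estimate_general {m : ℕ}
    (M : Matrix (Fin m) (Fin m) ℂ) (S : Matrix (Fin m) (Fin m) ℝ)
    (hS : ∀ i j, 0 < S i j) (c₀ : Fin m) (ρ : ℝ) (hρ : ρ ∈ Set.Icc (0 : ℝ) 1)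
    (hM : ∀ b c, ‖M b c‖ ≤ S b c - (1 / 2) * ρ * (if c = c₀ then 1 else 0))
    (x : Fin m → ℝ) (hx : ∀ j, 0 < x j) :
    ∀ b, (∑ c, ‖M b c‖ * x c) ≤
      (1 - (1 / (2 * m * (⨆ i, ⨆ j, S i j))) * ((⨅ j, x j) / (⨆ j, x j)) * ρ) *
        (S *ᵥ x) b := by
  intro b
  set A := ⨆ i, ⨆ j, S i j
  set X := ⨆ j, x j
  set Y := ⨅ j, x j
  have hρ₀ : 0 ≤ ρ := hρ.1
  have hm : (0 : ℝ) < m := Nat.cast_pos.mpr b.pos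
  have hA : 0 < A := (hS b b).trans_le (S.apply_le_iSup_iSup b b)
  have hX : 0 < X := (hx b).trans_le (le_ciSup (Finite.bddAbove_range x) b)
  have hY : 0 < Y := by
    have : Nonempty (Fin m) := ⟨b⟩
    obtain ⟨j, hj⟩ := exists_eq_ciInf_of_finite (f := x)
    exact (hx j).trans_eq hj
  have hSx : (S *ᵥ x) b ≤ m * A * X := by
    simpa using S.mulVec_apply_le_card_mul_iSup_mul_iSup (fun i j => (hS i j).le) x
      (fun j => (hx j).le) b
  have hsaving : 1 / (2 * m * A) * (Y / X) * ρ * (S *ᵥ x) b ≤ 1 / 2 * ρ * x c₀ :=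
    calc 1 / (2 * m * A) * (Y / X) * ρ * (S *ᵥ x) b
        ≤ 1 / (2 * m * A) * (Y / X) * ρ * (m * A * X) := by gcongr
      _ = 1 / 2 * ρ * Y := by field_simp
      _ ≤ 1 / 2 * ρ * x c₀ := by gcongr; exact ciInf_le (Finite.bddBelow_range x) c₀
  have hsum := sum_norm_mul_le_dotProduct_sub (M b) (S b) x c₀ (1 / 2 * ρ) (hM b)
    (fun j => (hx j).le)
  calc ∑ c, ‖M b c‖ * x c ≤ (S *ᵥ x) b - 1 / 2 * ρ * x c₀ := hsum
    _ ≤ (S *ᵥ x) b - 1 / (2 * m * A) * (Y / X) * ρ * (S *ᵥ x) b := by linarith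
    _ = _ := by ring

theorem contraction_estimate {m : ℕ} (hm : 0 < m)
    (M : Matrix (Fin m) (Fin m) ℂ) (S : Matrix (Fin m) (Fin m) ℝ)
    (hS : ∀ i j, 0 < S i j) (c₀ : Fin m) (ρ : ℝ) (hρ : ρ ∈ Set.Icc (0 : ℝ) 1)
    (hM : ∀ b c, ‖M b c‖ ≤ S b c - (1 / 2) * ρ * (if c = c₀ then 1 else 0))
    (x : Fin m → ℝ) (hx : ∀ j, 0 < x j) :
    ∀ b, (∑ c, ‖M b c‖ * x c) ≤
      (1 - (1 / (2 * m * (⨆ i, ⨆ j, S i j))) * ((⨅ j, x j) / (⨆ j, x j)) * ρ) *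
        (S *ᵥ x) b :=
  contraction_estimate_general M S hS c₀ ρ hρ hM x hx
end
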